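/- Let ℍ = {ζ ∈ ℂ : Re ζ > 0} be the right half-plane. For any two points p, q on the positive real axis with 0 < q < p, the Poincaré/Kobayashi distance of ℍ and of the disc Δ(p, p) centered at p of radius p satisfy: d^K_{Δ(p,p)}(p, q) ≤ d^K_{ℍ}(p, q) + log 2. -/

import Mathlib

open Set Metric

/-- The Kobayashi infinitesimal pseudometric of a domain `D` in a complex normed space. -/
noncomputable def kobMetric {E : Type*} [NormedAddCommGroup E] [NormedSpace ℂ E]
    (D : Set E) (p v : E) : ℝ :=
  sInf {α : ℝ | 0 < α ∧ ∃ f : ℂ → E, DifferentiableOn ℂ f (ball (0:ℂ) 1) ∧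
    MapsTo f (ball (0:ℂ) 1) D ∧ f 0 = p ∧ fderiv ℂ f 0 1 = α⁻¹ • v}

/-- The Kobayashi length of a path `γ : [0,1] → D`. -/
noncomputable def kobLength {E : Type*} [NormedAddCommGroup E] [NormedSpace ℂ E]
    (D : Set E) (γ : ℝ → E) : ℝ :=
  ∫ t in (0:ℝ)..1, kobMetric D (γ t) (derivWithin γ (Icc 0 1) t)

/-- The (integrated) Kobayashi pseudodistance of `D`: the infimum of Kobayashi lengths of
`C¹` paths in `D` joining `p` to `q`. -/
noncomputable def kobDist {E : Type*} [NormedAddCommGroup E] [NormedSpace ℂ E]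
    (D : Set E) (p q : E) : ℝ :=
  sInf {L : ℝ | ∃ γ : ℝ → E, ContDiffOn ℝ 1 γ (Icc 0 1) ∧ MapsTo γ (Icc 0 1) D ∧
    γ 0 = p ∧ γ 1 = q ∧ L = kobLength D γ}

/-!
On the right half-plane the Kobayashi metric is exactly `‖v‖ / (2 Re z)`: the Cayley transform
`w ↦ (w - z) / (w + conj z)` and the Schwarz lemma give the lower bound, a Möbius map of the unit
disc onto the half-plane realises it. Since `‖γ'‖ ≥ -(Re γ)'`, every path from `p` to `q` then has
length at least `(log p - log q) / 2`. On the disc `ball c r` the Möbius automorphisms give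
`kobMetric ≤ r ‖v‖ / (r ^ 2 - ‖z - c‖ ^ 2)`, and integrating this along the radius from `c` to `w`
bounds the distance by `(log (r + s) - log (r - s)) / 2`, `s = ‖w - c‖`. For `c = r = p`, `w = q`
this is `(log (2p - q) - log q) / 2 ≤ (log p - log q) / 2 + log 2`.
-/

open scoped ComplexConjugate
open MeasureTheory AffineMap

section Kobayashi

variable {E : Type*} [NormedAddCommGroup E] [NormedSpace ℂ E] {D : Set E}

lemma kobMetric_nonneg (z v : E) : 0 ≤ kobMetric D z v :=
  Real.sInf_nonneg fun _ hα => hα.1.le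

lemma kobMetric_le_of_hasDerivAt {f : ℂ → E} {v : E} {α : ℝ} (hα : 0 < α)
    (hf : DifferentiableOn ℂ f (ball 0 1)) (hfD : MapsTo f (ball 0 1) D)
    (hderiv : HasDerivAt f (α⁻¹ • v) 0) : kobMetric D (f 0) v ≤ α :=
  csInf_le ⟨0, fun _ hβ => hβ.1.le⟩
    ⟨hα, f, hf, hfD, rfl, by rw [hderiv.hasFDerivAt.fderiv]; simp⟩

lemma le_kobMetric {z v : E} {c : ℝ}
    (hne : ∃ f : ℂ → E, ∃ α : ℝ, 0 < α ∧ DifferentiableOn ℂ f (ball 0 1) ∧ MapsTo f (ball 0 1) D ∧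
      f 0 = z ∧ HasDerivAt f (α⁻¹ • v) 0)
    (hc : ∀ f : ℂ → E, ∀ α : ℝ, 0 < α → DifferentiableOn ℂ f (ball 0 1) → MapsTo f (ball 0 1) D →
      f 0 = z → fderiv ℂ f 0 1 = α⁻¹ • v → c ≤ α) :
    c ≤ kobMetric D z v := by
  obtain ⟨f, α, hα, hf, hfD, hf0, hderiv⟩ := hne
  refine le_csInf ⟨α, hα, f, hf, hfD, hf0, by rw [hderiv.hasFDerivAt.fderiv]; simp⟩ ?_
  rintro β ⟨hβ, g, hg, hgD, hg0, hgderiv⟩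
  exact hc g β hβ hg hgD hg0 hgderiv

lemma kobMetric_zero {z : E} (hz : z ∈ D) : kobMetric D z 0 = 0 := by
  refine le_antisymm (le_of_forall_pos_le_add fun ε hε => ?_) (kobMetric_nonneg z 0)
  simpa using kobMetric_le_of_hasDerivAt (D := D) hε (differentiableOn_const z)
    (fun _ _ => hz) (by simpa using hasDerivAt_const (0 : ℂ) z)

lemma kobLength_le_integral {γ : ℝ → E} {ψ : ℝ → ℝ} (hψ : IntervalIntegrable ψ volume 0 1)
    (hle : ∀ t ∈ Icc (0 : ℝ) 1, kobMetric D (γ t) (derivWithin γ (Icc 0 1) t) ≤ ψ t) :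
    kobLength D γ ≤ ∫ t in (0 : ℝ)..1, ψ t := by
  rw [kobLength, intervalIntegral.integral_of_le zero_le_one,
    intervalIntegral.integral_of_le zero_le_one]
  refine integral_mono_of_nonneg (.of_forall fun t => kobMetric_nonneg _ _)
    hψ.1 ((ae_restrict_iff' measurableSet_Ioc).2 (.of_forall fun t ht => ?_))
  exact hle t (Ioc_subset_Icc_self ht)

lemma kobLength_nonneg (γ : ℝ → E) : 0 ≤ kobLength D γ :=
  intervalIntegral.integral_nonneg zero_le_one fun _ _ => kobMetric_nonneg _ _

lemma kobDist_le_kobLength {γ : ℝ → E} (hγ : ContDiffOn ℝ 1 γ (Icc 0 1))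
    (hγD : MapsTo γ (Icc 0 1) D) : kobDist D (γ 0) (γ 1) ≤ kobLength D γ :=
  csInf_le ⟨0, fun _ ⟨σ, _, _, _, _, hL⟩ => hL ▸ kobLength_nonneg σ⟩ ⟨γ, hγ, hγD, rfl, rfl, rfl⟩

lemma le_kobDist {z w : E} {c : ℝ}
    (hpath : ∃ γ : ℝ → E, ContDiffOn ℝ 1 γ (Icc 0 1) ∧ MapsTo γ (Icc 0 1) D ∧ γ 0 = z ∧ γ 1 = w)
    (hc : ∀ γ : ℝ → E, ContDiffOn ℝ 1 γ (Icc 0 1) → MapsTo γ (Icc 0 1) D → γ 0 = z → γ 1 = w →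
      c ≤ kobLength D γ) :
    c ≤ kobDist D z w := by
  obtain ⟨γ, hγ, hγD, hγ0, hγ1⟩ := hpath
  refine le_csInf ⟨_, γ, hγ, hγD, hγ0, hγ1, rfl⟩ ?_
  rintro _ ⟨σ, hσ, hσD, hσ0, hσ1, rfl⟩
  exact hc σ hσ hσD hσ0 hσ1

lemma kobDist_le_integral_of_segment {z w : E} {ψ : ℝ → ℝ}
    (hseg : MapsTo (lineMap z w) (Icc (0 : ℝ) 1) D) (hψ : IntervalIntegrable ψ volume 0 1)
    (hle : ∀ t ∈ Icc (0 : ℝ) 1, kobMetric D (lineMap z w t) (w - z) ≤ ψ t) :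
    kobDist D z w ≤ ∫ t in (0 : ℝ)..1, ψ t := by
  have h := kobDist_le_kobLength (contDiff_lineMap z w).contDiffOn hseg
  rw [lineMap_apply_zero, lineMap_apply_one] at h
  refine h.trans (kobLength_le_integral hψ fun t ht => ?_)
  rw [hasDerivWithinAt_lineMap.derivWithin (uniqueDiffOn_Icc zero_lt_one t ht)]
  exact hle t ht

end Kobayashi

/-- The automorphism of the unit disc sending `0` to `a`. -/
noncomputable def discMobius (a w : ℂ) : ℂ := (a + w) / (1 + conj a * w)

lemma normSq_one_add_conj_mul_sub_normSq_add (a w : ℂ) :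
    Complex.normSq (1 + conj a * w) - Complex.normSq (a + w) =
      (1 - Complex.normSq a) * (1 - Complex.normSq w) := by
  simp only [Complex.normSq_apply, Complex.add_re, Complex.add_im, Complex.mul_re,
    Complex.mul_im, Complex.conj_re, Complex.conj_im, Complex.one_re, Complex.one_im]
  ring

lemma one_add_conj_mul_ne_zero {a w : ℂ} (ha : ‖a‖ < 1) (hw : ‖w‖ < 1) : 1 + conj a * w ≠ 0 := by
  intro h
  have : ‖conj a * w‖ < 1 := by
    rw [norm_mul, Complex.norm_conj]; nlinarith [norm_nonneg a, norm_nonneg w]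
  rw [eq_neg_of_add_eq_zero_right h] at this
  simp at this

lemma discMobius_mem_ball {a w : ℂ} (ha : ‖a‖ < 1) (hw : ‖w‖ < 1) :
    discMobius a w ∈ ball (0 : ℂ) 1 := by
  have hsq : ∀ z : ℂ, ‖z‖ < 1 → 0 < 1 - Complex.normSq z := fun z hz => by
    rw [Complex.normSq_eq_norm_sq]; nlinarith [norm_nonneg z]
  have hlt : Complex.normSq (a + w) < Complex.normSq (1 + conj a * w) := by
    linarith [normSq_one_add_conj_mul_sub_normSq_add a w, mul_pos (hsq a ha) (hsq w hw)]
  rw [mem_ball_zero_iff, discMobius, norm_div,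
    div_lt_one (norm_pos_iff.2 (one_add_conj_mul_ne_zero ha hw))]
  simpa only [Complex.normSq_eq_norm_sq, sq_lt_sq₀ (norm_nonneg _) (norm_nonneg _)] using hlt

lemma differentiableOn_discMobius {a : ℂ} (ha : ‖a‖ < 1) :
    DifferentiableOn ℂ (discMobius a) (ball 0 1) :=
  (differentiableOn_const a).add differentiableOn_id |>.div
    ((differentiableOn_const 1).add (differentiableOn_id.const_mul _))
    fun _ hw => one_add_conj_mul_ne_zero ha (mem_ball_zero_iff.1 hw)

lemma hasDerivAt_discMobius_zero (a : ℂ) : HasDerivAt (discMobius a) (1 - a * conj a) 0 := by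
  have h := ((hasDerivAt_id (0 : ℂ)).const_add a).div
    (((hasDerivAt_id (0 : ℂ)).const_mul (conj a)).const_add 1) (by simp)
  exact h.congr_deriv (by simp)

lemma kobMetric_ball_le {c z : ℂ} {r : ℝ} (hz : z ∈ ball c r) (v : ℂ) :
    kobMetric (ball c r) z v ≤ r * ‖v‖ / (r ^ 2 - ‖z - c‖ ^ 2) := by
  rcases eq_or_ne v 0 with rfl | hv
  · simp [kobMetric_zero hz]
  have hzc : ‖z - c‖ < r := mem_ball_iff_norm.1 hz
  have hr : 0 < r := (norm_nonneg _).trans_lt hzc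
  have hgap : 0 < r ^ 2 - ‖z - c‖ ^ 2 := by nlinarith [norm_nonneg (z - c)]
  set a : ℂ := (z - c) / r
  set l : ℂ := v / ‖v‖
  have ha : ‖a‖ < 1 := by
    rwa [norm_div, Complex.norm_real, Real.norm_of_nonneg hr.le, div_lt_one hr]
  have hl : ‖l‖ = 1 := by simp [l, hv]
  have hmaps : MapsTo (fun u => c + r * discMobius a (l * u)) (ball 0 1) (ball c r) := by
    intro u hu
    have hlu : ‖l * u‖ < 1 := by rw [norm_mul, hl, one_mul]; exact mem_ball_zero_iff.1 hu
    rw [mem_ball_iff_norm, add_sub_cancel_left, norm_mul, Complex.norm_real,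
      Real.norm_of_nonneg hr.le]
    exact mul_lt_of_lt_one_right hr (mem_ball_zero_iff.1 (discMobius_mem_ball ha hlu))
  have hdiff : DifferentiableOn ℂ (fun u => c + r * discMobius a (l * u)) (ball 0 1) :=
    (differentiableOn_const c).add <| (differentiableOn_const _).mul <|
      (differentiableOn_discMobius ha).comp (differentiableOn_id.const_mul l) fun u hu => by
        simpa [norm_mul, hl] using hu
  have hderiv : HasDerivAt (fun u => c + r * discMobius a (l * u))
      ((r * ‖v‖ / (r ^ 2 - ‖z - c‖ ^ 2))⁻¹ • v) 0 := by
    have h := (((hasDerivAt_discMobius_zero a).comp_of_eq (0 : ℂ)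
      ((hasDerivAt_id (0 : ℂ)).const_mul l) (by simp)).const_mul (r : ℂ)).const_add c
    refine h.congr_deriv ?_
    simp only [l]
    rw [Complex.mul_conj, Complex.normSq_eq_norm_sq, norm_div, Complex.norm_real,
      Real.norm_of_nonneg hr.le, Complex.real_smul]
    have : (‖v‖ : ℂ) ≠ 0 := by simpa using hv
    have : ((r ^ 2 - ‖z - c‖ ^ 2 : ℝ) : ℂ) ≠ 0 := by exact_mod_cast hgap.ne'
    have : (r : ℂ) ≠ 0 := by exact_mod_cast hr.ne'
    push_cast at *
    field_simp
  simpa [discMobius, a, mul_div_cancel₀ _ (Complex.ofReal_ne_zero.2 hr.ne')] using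
    kobMetric_le_of_hasDerivAt (D := ball c r) (by positivity) hdiff hmaps hderiv

lemma kobDist_ball_center_le {c w : ℂ} {r : ℝ} (hw : w ∈ ball c r) :
    kobDist (ball c r) c w ≤ (Real.log (r + ‖w - c‖) - Real.log (r - ‖w - c‖)) / 2 := by
  set s := ‖w - c‖
  have hs : s < r := mem_ball_iff_norm.1 hw
  have hs0 : 0 ≤ s := norm_nonneg _
  have hr : 0 < r := hs0.trans_lt hs
  have hpos : ∀ t ∈ uIcc (0 : ℝ) 1, 0 < r - t * s ∧ 0 < r + t * s := fun t ht => by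
    rw [uIcc_of_le zero_le_one] at ht
    constructor <;> nlinarith [ht.1, ht.2]
  have hΦ : ∀ t ∈ uIcc (0 : ℝ) 1,
      HasDerivAt (fun t => (Real.log (r + t * s) - Real.log (r - t * s)) / 2)
        (r * s / (r ^ 2 - (t * s) ^ 2)) t := fun t ht => by
    obtain ⟨hsub, hadd⟩ := hpos t ht
    have hplus : HasDerivAt (fun t => r + t * s) s t := by
      simpa using ((hasDerivAt_id t).mul_const s).const_add r
    have hminus : HasDerivAt (fun t => r - t * s) (-s) t := by
      simpa using ((hasDerivAt_id t).mul_const s).const_sub r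
    have h := ((hplus.log hadd.ne').sub (hminus.log hsub.ne')).div_const 2
    refine h.congr_deriv ?_
    rw [show r ^ 2 - (t * s) ^ 2 = (r + t * s) * (r - t * s) by ring, neg_div, sub_neg_eq_add,
      div_add_div _ _ hadd.ne' hsub.ne', div_div,
      div_eq_div_iff (by positivity) (mul_ne_zero hadd.ne' hsub.ne')]
    ring
  have hψ : IntervalIntegrable (fun t => r * s / (r ^ 2 - (t * s) ^ 2)) volume 0 1 :=
    ContinuousOn.intervalIntegrable <| continuousOn_const.div (by fun_prop) fun t ht => by
      obtain ⟨hsub, hadd⟩ := hpos t ht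
      nlinarith
  calc kobDist (ball c r) c w ≤ ∫ t in (0 : ℝ)..1, r * s / (r ^ 2 - (t * s) ^ 2) :=
        kobDist_le_integral_of_segment ((convex_ball c r).mapsTo_lineMap (mem_ball_self hr) hw)
          hψ fun t ht => ?_
    _ = _ := by rw [intervalIntegral.integral_eq_sub_of_hasDerivAt hΦ hψ]; simp
  have hdist : ‖lineMap c w t - c‖ = t * s := by
    rw [← dist_eq_norm, dist_lineMap_left, Real.norm_of_nonneg ht.1, dist_comm, dist_eq_norm]
  simpa only [hdist] using
    kobMetric_ball_le ((convex_ball c r).mapsTo_lineMap (mem_ball_self hr) hw ht) (w - c)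

/-- The biholomorphism of the unit disc onto the right half-plane sending `0` to `z`. -/
noncomputable def halfPlaneMobius (z w : ℂ) : ℂ := (z + conj z * w) / (1 - w)

lemma re_halfPlaneMobius_pos {z w : ℂ} (hz : 0 < z.re) (hw : ‖w‖ < 1) :
    0 < (halfPlaneMobius z w).re := by
  have hw1 : 1 - w ≠ 0 := fun h => by simp [← eq_of_sub_eq_zero h] at hw
  have hnum : (z + conj z * w).re * (1 - w).re + (z + conj z * w).im * (1 - w).im =
      z.re * (1 - Complex.normSq w) := by
    simp only [Complex.normSq_apply, Complex.add_re, Complex.add_im, Complex.mul_re,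
      Complex.mul_im, Complex.conj_re, Complex.conj_im, Complex.sub_re, Complex.sub_im,
      Complex.one_re, Complex.one_im]
    ring
  have hw2 : Complex.normSq w < 1 := by
    rw [Complex.normSq_eq_norm_sq]; nlinarith [norm_nonneg w]
  rw [halfPlaneMobius, Complex.div_re, ← add_div, hnum]
  exact div_pos (mul_pos hz (by linarith)) (Complex.normSq_pos.2 hw1)

lemma differentiableOn_halfPlaneMobius (z : ℂ) :
    DifferentiableOn ℂ (halfPlaneMobius z) (ball 0 1) :=
  (differentiableOn_const z).add (differentiableOn_id.const_mul _) |>.div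
    ((differentiableOn_const 1).sub differentiableOn_id)
    fun w hw h => by simp [← eq_of_sub_eq_zero h] at hw

lemma hasDerivAt_halfPlaneMobius_zero (z : ℂ) :
    HasDerivAt (halfPlaneMobius z) (2 * z.re) 0 := by
  have h := ((hasDerivAt_id (0 : ℂ)).const_mul (conj z)).const_add z |>.div
    ((hasDerivAt_id (0 : ℂ)).const_sub 1) (by simp)
  refine h.congr_deriv ?_
  simp [add_comm (conj z), Complex.add_conj]

lemma norm_sub_lt_norm_add_conj {w z : ℂ} (hw : 0 < w.re) (hz : 0 < z.re) :
    ‖w - z‖ < ‖w + conj z‖ := by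
  have h : Complex.normSq (w - z) < Complex.normSq (w + conj z) := by
    simp only [Complex.normSq_apply, Complex.sub_re, Complex.sub_im, Complex.add_re,
      Complex.add_im, Complex.conj_re, Complex.conj_im]
    nlinarith [mul_pos hw hz]
  simpa only [Complex.normSq_eq_norm_sq, sq_lt_sq₀ (norm_nonneg _) (norm_nonneg _)] using h

lemma norm_deriv_le_two_re {f : ℂ → ℂ} (hf : DifferentiableOn ℂ f (ball 0 1))
    (hfH : MapsTo f (ball 0 1) {ζ | 0 < ζ.re}) : ‖deriv f 0‖ ≤ 2 * (f 0).re := by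
  have h0 : (0 : ℂ) ∈ ball 0 1 := mem_ball_self one_pos
  have hz : 0 < (f 0).re := hfH h0
  have hden : ∀ u ∈ ball (0 : ℂ) 1, f u + conj (f 0) ≠ 0 := fun u hu h => by
    have := norm_sub_lt_norm_add_conj (hfH hu) hz
    rw [h, norm_zero] at this
    exact (norm_nonneg _).not_gt this
  set g : ℂ → ℂ := fun u => (f u - f 0) / (f u + conj (f 0))
  have hg : DifferentiableOn ℂ g (ball 0 1) :=
    (hf.sub (differentiableOn_const _)).div (hf.add (differentiableOn_const _)) hden
  have hgD : MapsTo g (ball 0 1) (closedBall (g 0) 1) := fun u hu => by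
    simp only [g, sub_self, zero_div, mem_closedBall_zero_iff, norm_div]
    exact div_le_one_of_le₀ (norm_sub_lt_norm_add_conj (hfH hu) hz).le (norm_nonneg _)
  have hderiv : HasDerivAt g (deriv f 0 / (2 * (f 0).re : ℝ)) 0 := by
    have hf0 := (hf.differentiableAt (isOpen_ball.mem_nhds h0)).hasDerivAt
    refine ((hf0.sub_const (f 0)).div (hf0.add_const _) (hden 0 h0)).congr_deriv ?_
    rw [← Complex.add_conj, sub_self, zero_mul, sub_zero, sq, mul_div_mul_right _ _ (hden 0 h0)]
  have := Complex.norm_deriv_le_one_of_mapsTo_ball hg hgD one_pos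
  rwa [hderiv.deriv, norm_div, Complex.norm_real, Real.norm_of_nonneg (by positivity),
    div_le_one (by positivity)] at this

lemma kobMetric_rightHalfPlane {z : ℂ} (hz : 0 < z.re) (v : ℂ) :
    kobMetric {ζ : ℂ | 0 < ζ.re} z v = ‖v‖ / (2 * z.re) := by
  rcases eq_or_ne v 0 with rfl | hv
  · simp [kobMetric_zero (show z ∈ {ζ : ℂ | 0 < ζ.re} from hz)]
  set l : ℂ := v / ‖v‖
  have hl : ‖l‖ = 1 := by simp [l, hv]
  set f : ℂ → ℂ := fun u => halfPlaneMobius z (l * u)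
  have hf0 : f 0 = z := by simp [f, halfPlaneMobius]
  have hf : DifferentiableOn ℂ f (ball 0 1) :=
    (differentiableOn_halfPlaneMobius z).comp (differentiableOn_id.const_mul l) fun u hu => by
      simpa [norm_mul, hl] using hu
  have hfH : MapsTo f (ball 0 1) {ζ | 0 < ζ.re} := fun u hu =>
    re_halfPlaneMobius_pos hz (by simpa [norm_mul, hl] using hu)
  have hderiv : HasDerivAt f ((‖v‖ / (2 * z.re))⁻¹ • v) 0 := by
    refine ((hasDerivAt_halfPlaneMobius_zero z).comp_of_eq (0 : ℂ)
      ((hasDerivAt_id (0 : ℂ)).const_mul l) (by simp)).congr_deriv ?_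
    have : (‖v‖ : ℂ) ≠ 0 := by simpa using hv
    simp only [l, Complex.real_smul]
    push_cast
    field_simp
  apply le_antisymm
  · simpa only [hf0] using kobMetric_le_of_hasDerivAt (by positivity) hf hfH hderiv
  refine le_kobMetric ⟨f, _, by positivity, hf, hfH, hf0, hderiv⟩ fun g α hα hg hgH hg0 hgv => ?_
  have h := norm_deriv_le_two_re hg hgH
  rw [← fderiv_apply_one_eq_deriv, hgv, hg0, norm_smul, norm_inv, Real.norm_of_nonneg hα.le,
    inv_mul_le_iff₀ hα] at h
  rw [div_le_iff₀ (by positivity)]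
  linarith

lemma half_log_re_sub_le_kobLength {σ : ℝ → ℂ} (hσ : ContDiffOn ℝ 1 σ (Icc 0 1))
    (hσH : MapsTo σ (Icc 0 1) {ζ | 0 < ζ.re}) :
    (Real.log (σ 0).re - Real.log (σ 1).re) / 2 ≤ kobLength {ζ : ℂ | 0 < ζ.re} σ := by
  set σ' := derivWithin σ (Icc 0 1)
  have hre : ∀ t ∈ Icc (0 : ℝ) 1, 0 < (σ t).re := fun t ht => hσH ht
  have hσ'c : ContinuousOn σ' (Icc 0 1) :=
    hσ.continuousOn_derivWithin (uniqueDiffOn_Icc zero_lt_one) le_rfl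
  have hrec : ContinuousOn (fun t => (σ t).re) (Icc 0 1) :=
    Complex.continuous_re.comp_continuousOn hσ.continuousOn
  have hlength : kobLength {ζ : ℂ | 0 < ζ.re} σ = ∫ t in (0 : ℝ)..1, ‖σ' t‖ / (2 * (σ t).re) :=
    intervalIntegral.integral_congr fun t ht =>
      kobMetric_rightHalfPlane (hre t (by rwa [uIcc_of_le zero_le_one] at ht)) _
  have hint : IntegrableOn (fun t => ‖σ' t‖ / (2 * (σ t).re)) (Icc 0 1) :=
    (hσ'c.norm.div (continuousOn_const.mul hrec) fun t ht =>
      (mul_pos two_pos (hre t ht)).ne').integrableOn_Icc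
  -- `‖σ'‖ ≥ -Re σ'`, and `-Re σ' / (2 Re σ)` is the derivative of `-log (Re σ) / 2`
  have hderiv : ∀ t ∈ Ioo (0 : ℝ) 1, HasDerivWithinAt (fun s => -Real.log (σ s).re / 2)
      (-(σ' t).re / (2 * (σ t).re)) (Ioi t) t := by
    intro t ht
    have hnhds : Icc (0 : ℝ) 1 ∈ nhds t := Icc_mem_nhds ht.1 ht.2
    have hσt : HasDerivAt σ (σ' t) t :=
      (hσ.differentiableOn one_ne_zero t (Ioo_subset_Icc_self ht)).hasDerivWithinAt.hasDerivAt
        hnhds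
    have := ((Real.hasDerivAt_log (hre t (Ioo_subset_Icc_self ht)).ne').comp t
      (Complex.reCLM.hasFDerivAt.comp_hasDerivAt t hσt)).neg.div_const 2
    refine (this.congr_deriv ?_).hasDerivWithinAt
    simp only [Complex.reCLM_apply]
    field_simp
  have := intervalIntegral.sub_le_integral_of_hasDeriv_right_of_le
    (g := fun s => -Real.log (σ s).re / 2) zero_le_one
    ((hrec.log fun t ht => (hre t ht).ne').neg.div_const 2) hderiv hint fun t ht =>
      div_le_div_of_nonneg_right ((neg_le_abs _).trans (Complex.abs_re_le_norm _))
        (mul_pos two_pos (hre t (Ioo_subset_Icc_self ht))).le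
  rw [hlength]
  linarith

lemma half_log_re_sub_le_kobDist {z w : ℂ} (hz : 0 < z.re) (hw : 0 < w.re) :
    (Real.log z.re - Real.log w.re) / 2 ≤ kobDist {ζ : ℂ | 0 < ζ.re} z w := by
  refine le_kobDist ⟨lineMap z w, (contDiff_lineMap z w).contDiffOn,
    (convex_halfSpace_re_gt 0).mapsTo_lineMap hz hw, lineMap_apply_zero z w,
    lineMap_apply_one z w⟩ ?_
  rintro σ hσ hσH rfl rfl
  exact half_log_re_sub_le_kobLength hσ hσH

/-- Let `ℍ = {Re ζ > 0}` and `0 < q < p` real. Then the Kobayashi (Poincaré)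
distances of `ℍ` and of the disc `Δ(p, p) = ball p p ⊆ ℍ` satisfy
`d^K_{Δ(p,p)}(p, q) ≤ d^K_ℍ(p, q) + log 2`. -/
theorem disc_halfplane_comparison
    (p q : ℝ) (hq : 0 < q) (hqp : q < p) :
    kobDist (ball ((p : ℂ)) p) (p : ℂ) (q : ℂ) ≤
      kobDist {ζ : ℂ | 0 < ζ.re} (p : ℂ) (q : ℂ) + Real.log 2 := by
  have hp : 0 < p := hq.trans hqp
  have hqp_norm : ‖(q : ℂ) - p‖ = p - q := by
    rw [← Complex.ofReal_sub, Complex.norm_real, Real.norm_of_nonpos (by linarith), neg_sub]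
  have hball := kobDist_ball_center_le (c := p) (r := p) (w := q)
    (by rw [mem_ball_iff_norm, hqp_norm]; linarith)
  have hhalf := half_log_re_sub_le_kobDist (z := p) (w := q) (by simpa) (by simpa)
  rw [hqp_norm, sub_sub_cancel] at hball
  simp only [Complex.ofReal_re] at hhalf
  have hlog : Real.log (p + (p - q)) ≤ Real.log 2 + Real.log p := by
    rw [← Real.log_mul two_ne_zero hp.ne']
    exact Real.log_le_log (by linarith) (by linarith)
  linarith [Real.log_nonneg one_le_two]
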